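/- arXiv:1205.1810 — 3 statements merged into one kernel-verified Lean document; each statement's English description precedes it below -/
import Mathlib

section
/- Let [a,b] be a finite real interval, m ≥ 1, A an integrable m×m complex matrix-valued function on [a,b] (each entry in L¹([a,b],ℂ)), φ : [a,b] → ℂ^m integrable, c ∈ [a,b], and α ∈ ℂ^m. Then there exists exactly one continuous function w : [a,b] → ℂ^m satisfying w(t) = α + ∫_c^t ( A(s) w(s) + φ(s) ) ds for all t ∈ [a,b] (i.e., a unique absolutely continuous solution of the Cauchy problem w' = A w + φ, w(c) = α). -/
/-!
The Picard operator `T u = α + ∫_c^· (L u + φ)` on `C([a, b], E)` satisfies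
`‖Tⁿ u τ - Tⁿ v τ‖ ≤ ‖u - v‖ |G τ|ⁿ / n!` with `G τ = ∫_c^τ ‖L‖`. The inductive step rests on
`∫_c^τ ‖L‖ Gⁿ = G τ ^ (n + 1) / (n + 1)`, the fundamental theorem of calculus for the absolutely
continuous function `Gⁿ⁺¹` (`L` is only integrable, so `G` is differentiable only almost
everywhere). Since `|G| ≤ ∫_a^b ‖L‖`, some iterate of `T` is a contraction; hence `T` has exactly
one fixed point, and the fixed points of `T` are the continuous solutions.
-/

open MeasureTheory Set

theorem integral_mul_primitive_pow {B : ℝ → ℝ} {c t : ℝ}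
    (hB : IntervalIntegrable B volume c t) (n : ℕ) :
    ∫ s in c..t, B s * (∫ r in c..s, B r) ^ n = (∫ r in c..t, B r) ^ (n + 1) / (n + 1) := by
  set G : ℝ → ℝ := fun s => ∫ r in c..s, B r
  have hG : AbsolutelyContinuousOnInterval G c t :=
    hB.absolutelyContinuousOnInterval_intervalIntegral left_mem_uIcc
  have hGpow : ∀ k : ℕ, AbsolutelyContinuousOnInterval (fun s => G s ^ (k + 1)) c t := by
    intro k
    induction k with
    | zero => simpa using hG
    | succ k ih => simpa only [pow_succ] using ih.fun_mul hG
  have hderiv : ∀ᵐ s, s ∈ uIoc c t →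
      deriv (fun s => G s ^ (n + 1)) s = (n + 1) * (B s * G s ^ n) := by
    filter_upwards [hB.ae_hasDerivAt_integral] with s hs hsct
    have := ((hs (uIoc_subset_uIcc hsct) c left_mem_uIcc).fun_pow (n + 1)).deriv
    rw [this]
    push_cast
    ring
  have hGc : G c = 0 := intervalIntegral.integral_same
  have hFTC := (hGpow n).integral_deriv_eq_sub
  rw [intervalIntegral.integral_congr_ae hderiv, intervalIntegral.integral_const_mul, hGc,
    zero_pow n.succ_ne_zero, sub_zero] at hFTC
  change ∫ s in c..t, B s * G s ^ n = G t ^ (n + 1) / (n + 1)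
  rw [← hFTC]
  field_simp

theorem abs_integral_mul_abs_primitive_pow {B : ℝ → ℝ} {c t : ℝ}
    (hB : IntervalIntegrable B volume c t) (hB0 : ∀ s, 0 ≤ B s) (n : ℕ) :
    |∫ s in c..t, B s * |∫ r in c..s, B r| ^ n| = |∫ r in c..t, B r| ^ (n + 1) / (n + 1) := by
  -- between `c` and `t` the primitive has the constant sign of `t - c`
  obtain ⟨σ, hσ, hσG⟩ : ∃ σ : ℝ, |σ| = 1 ∧
      ∀ s ∈ uIcc c t, |∫ r in c..s, B r| = σ * ∫ r in c..s, B r := by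
    rcases le_total c t with hct | htc
    · refine ⟨1, abs_one, fun s hs => ?_⟩
      rw [uIcc_of_le hct] at hs
      rw [one_mul, abs_of_nonneg (intervalIntegral.integral_nonneg hs.1 fun r _ => hB0 r)]
    · refine ⟨-1, by simp, fun s hs => ?_⟩
      rw [uIcc_of_ge htc] at hs
      rw [intervalIntegral.integral_symm, abs_neg, neg_one_mul, neg_neg,
        abs_of_nonneg (intervalIntegral.integral_nonneg hs.2 fun r _ => hB0 r)]
  have hcongr : ∫ s in c..t, B s * |∫ r in c..s, B r| ^ n
      = σ ^ n * ∫ s in c..t, B s * (∫ r in c..s, B r) ^ n := by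
    rw [← intervalIntegral.integral_const_mul]
    refine intervalIntegral.integral_congr fun s hs => ?_
    simp only [hσG s hs, mul_pow]
    ring
  rw [hcongr, integral_mul_primitive_pow hB, abs_mul, abs_pow, hσ, one_pow, one_mul, abs_div,
    abs_pow]
  norm_cast

theorem continuous_primitive_Icc {E : Type*} [NormedAddCommGroup E] [NormedSpace ℝ E]
    {f : ℝ → E} {a b c : ℝ} (hf : IntegrableOn f (Icc a b)) (hc : c ∈ Icc a b) :
    Continuous fun τ : Icc a b => ∫ s in c..τ, f s := by
  have hab : a ≤ b := hc.1.trans hc.2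
  rw [← uIcc_of_le hab] at hf hc
  have := intervalIntegral.continuousOn_primitive_interval' hf.intervalIntegrable hc
  rw [uIcc_of_le hab] at this
  exact this.domRestrict

section LinearIntegralEquation

variable {𝕜 E : Type*} [NontriviallyNormedField 𝕜] [NormedAddCommGroup E] [NormedSpace 𝕜 E]
  {L : ℝ → E →L[𝕜] E} {φ : ℝ → E} {a b c : ℝ}

theorem integrableOn_clm_apply_add (hL : IntegrableOn L (Icc a b)) (hφ : IntegrableOn φ (Icc a b))
    {w : ℝ → E} (hw : ContinuousOn w (Icc a b)) :
    IntegrableOn (fun s => L s (w s) + φ s) (Icc a b) := by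
  obtain ⟨C, hC⟩ := isCompact_Icc.exists_bound_of_continuousOn hw
  refine Integrable.add ?_ hφ
  have hmeas : AEStronglyMeasurable (fun s => L s (w s)) (volume.restrict (Icc a b)) :=
    isBoundedBilinearMap_apply.continuous.comp_aestronglyMeasurable₂ hL.aestronglyMeasurable
      (hw.aestronglyMeasurable measurableSet_Icc)
  refine (hL.norm.mul_const C).mono' hmeas ?_
  filter_upwards [ae_restrict_mem measurableSet_Icc] with s hs
  exact (L s).le_opNorm_of_le (hC s hs)

variable [NormedSpace ℝ E]

variable (L φ a b c) in
def IsIntegralSolution (α : E) (w : ℝ → E) : Prop :=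
  ContinuousOn w (Icc a b) ∧ IntegrableOn (fun s => L s (w s) + φ s) (Icc a b) ∧
    ∀ t ∈ Icc a b, w t = α + ∫ s in c..t, (L s (w s) + φ s)

noncomputable def picardMap (hc : c ∈ Icc a b) (hL : IntegrableOn L (Icc a b))
    (hφ : IntegrableOn φ (Icc a b)) (α : E) (u : C(Icc a b, E)) : C(Icc a b, E) where
  toFun τ := α + ∫ s in c..τ, L s (IccExtend (hc.1.trans hc.2) u s) + φ s
  continuous_toFun := continuous_const.add <| continuous_primitive_Icc
    (integrableOn_clm_apply_add hL hφ
      (u.continuous.Icc_extend' (h := hc.1.trans hc.2)).continuousOn) hc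

section Picard

variable (hc : c ∈ Icc a b) (hL : IntegrableOn L (Icc a b)) (hφ : IntegrableOn φ (Icc a b))
  (α : E)

theorem picardMap_apply (u : C(Icc a b, E)) (τ : Icc a b) :
    picardMap hc hL hφ α u τ = α + ∫ s in c..τ, L s (IccExtend (hc.1.trans hc.2) u s) + φ s :=
  rfl

theorem picardMap_sub_picardMap_apply (u v : C(Icc a b, E)) (τ : Icc a b) :
    picardMap hc hL hφ α u τ - picardMap hc hL hφ α v τ =
      ∫ s in c..τ, L s (IccExtend (hc.1.trans hc.2) u s - IccExtend (hc.1.trans hc.2) v s) := by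
  have hint : ∀ w : C(Icc a b, E), IntervalIntegrable
      (fun s => L s (IccExtend (hc.1.trans hc.2) w s) + φ s) volume c τ := fun w =>
    (IntegrableOn.mono_set (integrableOn_clm_apply_add hL hφ
      (w.continuous.Icc_extend' (h := hc.1.trans hc.2)).continuousOn)
      (uIcc_subset_Icc hc τ.2)).intervalIntegrable
  rw [picardMap_apply, picardMap_apply, add_sub_add_left_eq_sub,
    ← intervalIntegral.integral_sub (hint u) (hint v)]
  simp only [map_sub, add_sub_add_right_eq_sub]

theorem norm_iterate_picardMap_sub_le (n : ℕ) (u v : C(Icc a b, E)) (τ : Icc a b) :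
    ‖(picardMap hc hL hφ α)^[n] u τ - (picardMap hc hL hφ α)^[n] v τ‖ ≤
      dist u v * (|∫ s in c..τ, ‖L s‖| ^ n / n.factorial) := by
  induction n generalizing τ with
  | zero => simpa [dist_eq_norm] using ContinuousMap.dist_apply_le_dist (f := u) (g := v) τ
  | succ n ih =>
    set G : ℝ → ℝ := fun s => ∫ r in c..s, ‖L r‖
    have hB' : IntegrableOn (fun s => ‖L s‖) (uIcc c τ) :=
      (hL.mono_set (uIcc_subset_Icc hc τ.2)).norm
    have hB := hB'.intervalIntegrable
    have hbound : ∀ s ∈ uIoc c τ, ‖L s (IccExtend (hc.1.trans hc.2) ((picardMap hc hL hφ α)^[n] u) s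
        - IccExtend (hc.1.trans hc.2) ((picardMap hc hL hφ α)^[n] v) s)‖
          ≤ ‖L s‖ * (dist u v * (|G s| ^ n / n.factorial)) := by
      intro s hs
      have hs' : s ∈ Icc a b := uIcc_subset_Icc hc τ.2 (uIoc_subset_uIcc hs)
      rw [IccExtend_of_mem _ _ hs', IccExtend_of_mem _ _ hs']
      exact (L s).le_opNorm_of_le (ih ⟨s, hs'⟩)
    have hG : ContinuousOn G (uIcc c τ) :=
      intervalIntegral.continuousOn_primitive_interval hB'
    rw [Function.iterate_succ_apply', Function.iterate_succ_apply', picardMap_sub_picardMap_apply]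
    calc _ ≤ |∫ s in c..τ, ‖L s‖ * (dist u v * (|G s| ^ n / n.factorial))| :=
          intervalIntegral.norm_integral_le_abs_of_norm_le
            (ae_restrict_of_forall_mem measurableSet_uIoc hbound)
            (hB.mul_continuousOn (continuousOn_const.mul ((hG.abs.pow n).div_const _)))
      _ = dist u v / n.factorial * |∫ s in c..τ, ‖L s‖ * |G s| ^ n| := by
          rw [← abs_of_nonneg (by positivity : 0 ≤ dist u v / n.factorial), ← abs_mul,
            ← intervalIntegral.integral_const_mul]
          congr 2 with s
          ring
      _ = dist u v * (|G τ| ^ (n + 1) / (n + 1).factorial) := by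
          rw [abs_integral_mul_abs_primitive_pow hB (fun s => norm_nonneg _) n, Nat.factorial_succ]
          push_cast
          field_simp
          rfl

theorem exists_contractingWith_iterate_picardMap :
    ∃ n, ContractingWith 2⁻¹ (picardMap hc hL hφ α)^[n] := by
  set M := ∫ s in Icc a b, ‖L s‖
  have hM : ∀ τ : Icc a b, |∫ s in c..τ, ‖L s‖| ≤ M := fun τ => by
    have := intervalIntegral.norm_integral_le_integral_norm_uIoc (f := fun s => ‖L s‖) (a := c)
      (b := τ) (μ := volume)
    simp only [Real.norm_eq_abs, abs_norm] at this
    exact this.trans <| setIntegral_mono_set hL.norm (ae_of_all _ fun s => norm_nonneg _)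
      (uIoc_subset_uIcc.trans (uIcc_subset_Icc hc τ.2)).eventuallyLE
  obtain ⟨n, hn⟩ := ((FloorSemiring.tendsto_pow_div_factorial_atTop M).eventually_lt_const
    (by norm_num : (0 : ℝ) < 2⁻¹)).exists
  refine ⟨n, by norm_num, LipschitzWith.of_dist_le_mul fun u v => ?_⟩
  rw [ContinuousMap.dist_le (by positivity)]
  intro τ
  calc dist _ _ ≤ dist u v * (|∫ s in c..τ, ‖L s‖| ^ n / n.factorial) := by
        rw [dist_eq_norm]
        exact norm_iterate_picardMap_sub_le hc hL hφ α n u v τ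
    _ ≤ dist u v * 2⁻¹ := by
        gcongr
        exact (div_le_div_of_nonneg_right (pow_le_pow_left₀ (abs_nonneg _) (hM τ) n)
          (Nat.cast_nonneg _)).trans hn.le
    _ = _ := by rw [mul_comm]; norm_num

theorem existsUnique_isFixedPt_picardMap [CompleteSpace E] :
    ∃! u, Function.IsFixedPt (picardMap hc hL hφ α) u := by
  obtain ⟨n, hn⟩ := exists_contractingWith_iterate_picardMap hc hL hφ α
  exact ⟨_, hn.isFixedPt_fixedPoint_iterate, fun u hu => hn.fixedPoint_unique (hu.iterate n)⟩

theorem IsIntegralSolution.isFixedPt_picardMap {w : ℝ → E}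
    (hw : IsIntegralSolution L φ a b c α w) :
    Function.IsFixedPt (picardMap hc hL hφ α) ⟨(Icc a b).domRestrict w, hw.1.domRestrict⟩ := by
  ext τ
  rw [picardMap_apply]
  change _ = w τ
  rw [hw.2.2 τ τ.2]
  congr 1
  refine intervalIntegral.integral_congr fun s hs => ?_
  rw [IccExtend_of_mem _ _ (uIcc_subset_Icc hc τ.2 hs)]
  rfl

theorem isIntegralSolution_IccExtend_of_isFixedPt {u : C(Icc a b, E)}
    (hu : Function.IsFixedPt (picardMap hc hL hφ α) u) :
    IsIntegralSolution L φ a b c α (IccExtend (hc.1.trans hc.2) u) := by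
  have hcont := u.continuous.Icc_extend' (h := hc.1.trans hc.2)
  refine ⟨hcont.continuousOn, integrableOn_clm_apply_add hL hφ hcont.continuousOn, fun t ht => ?_⟩
  rw [IccExtend_of_mem _ _ ht]
  exact (DFunLike.congr_fun hu.eq ⟨t, ht⟩).symm

end Picard

theorem exists_isIntegralSolution_eqOn [CompleteSpace E] (hc : c ∈ Icc a b)
    (hL : IntegrableOn L (Icc a b)) (hφ : IntegrableOn φ (Icc a b)) (α : E) :
    ∃ w, IsIntegralSolution L φ a b c α w ∧
      ∀ w', IsIntegralSolution L φ a b c α w' → EqOn w' w (Icc a b) := by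
  obtain ⟨u, hu, huniq⟩ := existsUnique_isFixedPt_picardMap hc hL hφ α
  refine ⟨_, isIntegralSolution_IccExtend_of_isFixedPt hc hL hφ α hu, fun w' hw' t ht => ?_⟩
  rw [IccExtend_of_mem _ _ ht, ← huniq _ (hw'.isFixedPt_picardMap hc hL hφ α)]
  rfl

end LinearIntegralEquation

theorem Matrix.exists_integrable_mulVec_clm {ι α 𝕜 : Type*} [Fintype ι] [DecidableEq ι]
    [NontriviallyNormedField 𝕜] [CompleteSpace 𝕜] [MeasurableSpace α] {μ : Measure α}
    {A : α → Matrix ι ι 𝕜} (hA : ∀ i j, Integrable (fun t => A t i j) μ) :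
    ∃ L : α → (ι → 𝕜) →L[𝕜] (ι → 𝕜), Integrable L μ ∧ ∀ t x, L t x = (A t).mulVec x := by
  let Φ : (ι → ι → 𝕜) →L[𝕜] (ι → 𝕜) →L[𝕜] (ι → 𝕜) := LinearMap.toContinuousLinearMap
    (LinearMap.toContinuousLinearMap.toLinearMap ∘ₗ Matrix.toLin'.toLinearMap ∘ₗ
      (Matrix.ofLinearEquiv 𝕜).toLinearMap)
  have hA' : Integrable (fun t i j => A t i j) μ :=
    integrable_pi_iff.2 fun i => integrable_pi_iff.2 fun j => hA i j
  exact ⟨fun t => Φ fun i j => A t i j, Φ.integrable_comp hA', fun t x => rfl⟩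

theorem cauchy_problem_linear_system_existence_uniqueness_general
    (a b : ℝ) (m : ℕ)
    (A : ℝ → Matrix (Fin m) (Fin m) ℂ)
    (hA : ∀ j k : Fin m, MeasureTheory.IntegrableOn (fun t => A t j k) (Set.Icc a b))
    (φ : ℝ → (Fin m → ℂ))
    (hφ : MeasureTheory.IntegrableOn φ (Set.Icc a b))
    (c : ℝ) (hc : c ∈ Set.Icc a b) (α : Fin m → ℂ) :
    ∃ w : ℝ → (Fin m → ℂ),
      (ContinuousOn w (Set.Icc a b) ∧
        MeasureTheory.IntegrableOn (fun s => (A s).mulVec (w s) + φ s) (Set.Icc a b) ∧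
        ∀ t ∈ Set.Icc a b, w t = α + ∫ s in c..t, ((A s).mulVec (w s) + φ s)) ∧
      ∀ w' : ℝ → (Fin m → ℂ),
        (ContinuousOn w' (Set.Icc a b) ∧
          MeasureTheory.IntegrableOn (fun s => (A s).mulVec (w' s) + φ s) (Set.Icc a b) ∧
          ∀ t ∈ Set.Icc a b, w' t = α + ∫ s in c..t, ((A s).mulVec (w' s) + φ s)) →
        Set.EqOn w' w (Set.Icc a b) := by
  obtain ⟨L, hL, hLA⟩ := Matrix.exists_integrable_mulVec_clm hA
  simpa only [IsIntegralSolution, hLA] using exists_isIntegralSolution_eqOn hc hL hφ α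

/-- **Existence and uniqueness for the Cauchy problem of a first-order linear system with
integrable coefficients.**  Let `[a,b]` be a finite interval, `m ≥ 1`, `A` an integrable
`m × m` complex matrix-valued function on `[a,b]`, `φ : [a,b] → ℂ^m` integrable,
`c ∈ [a,b]` and `α ∈ ℂ^m`.  Then there is exactly one continuous `w : [a,b] → ℂ^m`
(unique as a function on `[a,b]`) with
`w t = α + ∫_c^t (A s · w s + φ s) ds` for all `t ∈ [a,b]`, i.e. a unique absolutely
continuous (Carathéodory) solution of `w' = A w + φ`, `w c = α`. -/
theorem cauchy_problem_linear_system_existence_uniqueness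
    (a b : ℝ) (hab : a < b) (m : ℕ) (hm : 1 ≤ m)
    (A : ℝ → Matrix (Fin m) (Fin m) ℂ)
    (hA : ∀ j k : Fin m, MeasureTheory.IntegrableOn (fun t => A t j k) (Set.Icc a b))
    (φ : ℝ → (Fin m → ℂ))
    (hφ : MeasureTheory.IntegrableOn φ (Set.Icc a b))
    (c : ℝ) (hc : c ∈ Set.Icc a b) (α : Fin m → ℂ) :
    ∃ w : ℝ → (Fin m → ℂ),
      (ContinuousOn w (Set.Icc a b) ∧
        MeasureTheory.IntegrableOn (fun s => (A s).mulVec (w s) + φ s) (Set.Icc a b) ∧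
        ∀ t ∈ Set.Icc a b, w t = α + ∫ s in c..t, ((A s).mulVec (w s) + φ s)) ∧
      ∀ w' : ℝ → (Fin m → ℂ),
        (ContinuousOn w' (Set.Icc a b) ∧
          MeasureTheory.IntegrableOn (fun s => (A s).mulVec (w' s) + φ s) (Set.Icc a b) ∧
          ∀ t ∈ Set.Icc a b, w' t = α + ∫ s in c..t, ((A s).mulVec (w' s) + φ s)) →
        Set.EqOn w' w (Set.Icc a b) :=
  cauchy_problem_linear_system_existence_uniqueness_general a b m A hA φ hφ c hc α
end

section
/- Let A be a Shin–Zettl matrix of even order m = 2n (n ≥ 2) on a finite interval [a,b] with A = A⁺, and let Γ₁, Γ₂ : Dom(L_max) → ℂ^{2n} be the boundary maps defined below. Then for all y, z ∈ Dom(L_max): ⟨L_max y, z⟩_{L²} − ⟨y, L_max z⟩_{L²} = ⟨Γ₁y, Γ₂z⟩_{ℂ^{2n}} − ⟨Γ₂y, Γ₁z⟩_{ℂ^{2n}} (the abstract Green identity). -/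
open MeasureTheory Set Matrix Filter
open scoped ComplexInnerProductSpace

noncomputable section

/-- Lebesgue measure restricted to the interval `[a,b]`. -/
def muab (a b : ℝ) : MeasureTheory.Measure ℝ := MeasureTheory.volume.restrict (Set.Icc a b)

/-- `A` is a Shin–Zettl matrix of order `m` on `[a,b]`. -/
structure IsShinZettl (a b : ℝ) {m : ℕ} (A : ℝ → Matrix (Fin m) (Fin m) ℂ) : Prop where
  eq_zero_of_gt : ∀ (k s : Fin m), (k : ℕ) + 1 < (s : ℕ) → ∀ t : ℝ, A t k s = 0
  integrable : ∀ (k s : Fin m), MeasureTheory.IntegrableOn (fun t => A t k s) (Set.Icc a b)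
  superdiag_ne_zero : ∀ (k s : Fin m), (s : ℕ) = (k : ℕ) + 1 →
    ∀ᵐ t ∂(muab a b), A t k s ≠ 0

/-- `HasQD a b A y w f` : for `k < m` the function `w k` is the `k`-th quasi-derivative of
`y = w 0` relative to the Shin–Zettl matrix `A`, each being absolutely continuous on `[a,b]`
(an indefinite integral of an `L¹` function), and `f` is the `m`-th quasi-derivative `D^[m]y`. -/
def HasQD (a b : ℝ) {m : ℕ} (A : ℝ → Matrix (Fin m) (Fin m) ℂ)
    (y : ℝ → ℂ) (w : Fin m → ℝ → ℂ) (f : ℝ → ℂ) : Prop :=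
  (∀ j : Fin m, (j : ℕ) = 0 → w j = y) ∧
  MeasureTheory.IntegrableOn f (Set.Icc a b) ∧
  ∀ j : Fin m,
    MeasureTheory.IntegrableOn
      (fun s => (∑ k, A s j k * w k s) + (if (j : ℕ) + 1 = m then f s else 0)) (Set.Icc a b) ∧
    ∀ t ∈ Set.Icc a b,
      w j t = w j a +
        ∫ s in a..t, ((∑ k, A s j k * w k s) + (if (j : ℕ) + 1 = m then f s else 0))

/-- The Hilbert space `L²([a,b],ℂ)`. -/
abbrev L2C (a b : ℝ) := MeasureTheory.Lp ℂ 2 (muab a b)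

/-- The graph of the maximal quasi-differential operator `L_max` in `L²([a,b],ℂ)`. -/
def maxGraph (a b : ℝ) {m : ℕ} (A : ℝ → Matrix (Fin m) (Fin m) ℂ) :
    Set (L2C a b × L2C a b) :=
  {p | ∃ y w f, HasQD a b A y w f ∧ MeasureTheory.MemLp f 2 (muab a b) ∧
    (⇑p.1 =ᵐ[muab a b] y) ∧ (⇑p.2 =ᵐ[muab a b] fun t => Complex.I ^ m * f t)}

/-- The graph of the minimal quasi-differential operator `L_min` in `L²([a,b],ℂ)`. -/
def minGraph (a b : ℝ) {m : ℕ} (A : ℝ → Matrix (Fin m) (Fin m) ℂ) :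
    Set (L2C a b × L2C a b) :=
  {p | ∃ y w f, HasQD a b A y w f ∧ MeasureTheory.MemLp f 2 (muab a b) ∧
    (⇑p.1 =ᵐ[muab a b] y) ∧ (⇑p.2 =ᵐ[muab a b] fun t => Complex.I ^ m * f t) ∧
    ∀ j : Fin m, w j a = 0 ∧ w j b = 0}

/-- The matrix `Λ_m`: `(Λ_m)_{j,k} = (−1)^j` if `j + k = m + 1` (1-based indexing),
`0` otherwise. -/
def LambdaM (m : ℕ) : Matrix (Fin m) (Fin m) ℂ :=
  Matrix.of fun j k => if (j : ℕ) + (k : ℕ) = m - 1 then (-1 : ℂ) ^ ((j : ℕ) + 1) else 0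

/-- The formally adjoint (Lagrange adjoint) matrix `A⁺ = −Λ_m⁻¹ conj(Aᵀ) Λ_m`. -/
def formalAdjoint {m : ℕ} (A : ℝ → Matrix (Fin m) (Fin m) ℂ) :
    ℝ → Matrix (Fin m) (Fin m) ℂ :=
  fun t => -((LambdaM m)⁻¹ * (A t)ᴴ * LambdaM m)

/-- The graph of the Hilbert-space adjoint of the operator whose graph is `S`:
`(g, h)` belongs to it iff `⟪T y, g⟫ = ⟪y, h⟫` for every `(y, T y) ∈ S`. -/
def adjointRel {a b : ℝ} (S : Set (L2C a b × L2C a b)) : Set (L2C a b × L2C a b) :=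
  {q | ∀ p ∈ S, ⟪p.2, q.1⟫ = ⟪p.1, q.2⟫}

/-- The boundary map `Γ₁` for even order `m = 2n`:
`Γ₁y = i^{2n} (−D^[2n−1]y(a), …, (−1)^n D^[n]y(a), D^[2n−1]y(b), …, (−1)^{n−1} D^[n]y(b))`.
The index `j < n` corresponds to `k = j+1 ∈ {1,…,n}` and the value is
`i^{2n}(−1)^k D^[2n−k]y(a)`; for `n ≤ j < 2n` (`k = j−n+1`) it is
`i^{2n}(−1)^{k−1} D^[2n−k]y(b)`.  Here `w k = D^[k]y`. -/
def Gamma1E (a b : ℝ) {n : ℕ} (w : Fin (2 * n) → ℝ → ℂ) : Fin (2 * n) → ℂ := fun j =>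
  if (j : ℕ) < n then
    Complex.I ^ (2 * n) * (-1 : ℂ) ^ ((j : ℕ) + 1) *
      w ⟨2 * n - 1 - (j : ℕ), by have := j.isLt; omega⟩ a
  else
    Complex.I ^ (2 * n) * (-1 : ℂ) ^ ((j : ℕ) - n) *
      w ⟨2 * n - 1 - ((j : ℕ) - n), by have := j.isLt; omega⟩ b

/-- The boundary map `Γ₂` for even order `m = 2n`:
`Γ₂y = (D^[0]y(a), …, D^[n−1]y(a), D^[0]y(b), …, D^[n−1]y(b))`.  Here `w k = D^[k]y`. -/
def Gamma2E (a b : ℝ) {n : ℕ} (w : Fin (2 * n) → ℝ → ℂ) : Fin (2 * n) → ℂ := fun j =>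
  if (j : ℕ) < n then w j a
  else w ⟨(j : ℕ) - n, by have := j.isLt; omega⟩ b

/-!
Let `W_y = (D^[0]y, …, D^[m-1]y)` be the vector of quasi-derivatives, so that
`W_y' = A W_y + D^[m]y · e_m`. The Lagrange bracket `[y, z] = W_yᴴ Λ_m W_z` then has derivative
`(-1)^m conj(D^[m]y) z - conj(y) D^[m]z`: the terms involving `A` cancel because `A = A⁺` means
`Λ_m A = -Aᴴ Λ_m`. Integrating over `[a, b]` writes the left-hand side as
`i^{2n} ([y, z](b) - [y, z](a))`, and splitting the bracket into the lower and upper halves of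
the quasi-derivatives turns this boundary term into `⟨Γ₁y, Γ₂z⟩ - ⟨Γ₂y, Γ₁z⟩`.
-/

section Primitive

variable {𝕜 : Type*} [RCLike 𝕜] {a b : ℝ}

def IsPrimitiveOn (a b : ℝ) (u p : ℝ → 𝕜) : Prop :=
  IntegrableOn p (Icc a b) ∧ ∀ t ∈ Icc a b, u t = u a + ∫ s in a..t, p s

lemma MeasureTheory.IntegrableOn.intervalIntegrable_of_mem_Icc {f : ℝ → 𝕜}
    (hf : IntegrableOn f (Icc a b)) {t : ℝ} (ht : t ∈ Icc a b) : IntervalIntegrable f volume a t :=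
  (hf.mono_set (uIcc_subset_Icc (left_mem_Icc.2 (ht.1.trans ht.2)) ht)).intervalIntegrable

lemma MeasureTheory.Integrable.conj {α : Type*} [MeasurableSpace α] {μ : Measure α} {f : α → 𝕜}
    (hf : Integrable f μ) : Integrable (fun x => starRingEnd 𝕜 (f x)) μ :=
  (RCLike.conjLIE (K := 𝕜)).integrable_comp_iff.2 hf

lemma setIntegral_Ioc_indicator_Iic {f : ℝ → 𝕜} {t : ℝ} (ht : t ∈ Ioc a b) :
    ∫ s in Ioc a b, (Iic t).indicator f s = ∫ s in a..t, f s := by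
  rw [integral_indicator measurableSet_Iic, Measure.restrict_restrict measurableSet_Iic,
    Iic_inter_Ioc_of_le ht.2, intervalIntegral.integral_of_le ht.1.le]

lemma setIntegral_Ioc_indicator_Iio {f : ℝ → 𝕜} {t : ℝ} (ht : t ∈ Ioc a b) :
    ∫ s in Ioc a b, (Iio t).indicator f s = ∫ s in a..t, f s := by
  rw [integral_indicator measurableSet_Iio, Measure.restrict_restrict measurableSet_Iio,
    intervalIntegral.integral_of_le ht.1.le, integral_Ioc_eq_integral_Ioo]
  congr 2
  ext s
  simp only [mem_inter_iff, mem_Iio, mem_Ioc, mem_Ioo]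
  constructor
  · rintro ⟨hst, has, -⟩; exact ⟨has, hst⟩
  · rintro ⟨has, hst⟩; exact ⟨hst, has, hst.le.trans ht.2⟩

-- Fubini on `[a, b]²`, split along the diagonal.
lemma integral_mul_primitive_add_primitive_mul {p q : ℝ → 𝕜} (hab : a ≤ b)
    (hp : IntegrableOn p (Icc a b)) (hq : IntegrableOn q (Icc a b)) :
    (∫ t in a..b, p t * ∫ s in a..t, q s) + ∫ t in a..b, (∫ s in a..t, p s) * q t =
      (∫ t in a..b, p t) * ∫ t in a..b, q t := by
  set μ : Measure ℝ := volume.restrict (Ioc a b)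
  set F : ℝ × ℝ → 𝕜 := fun z => p z.1 * q z.2
  set S : Set (ℝ × ℝ) := {z | z.2 ≤ z.1}
  have hS : MeasurableSet S := measurableSet_le measurable_snd measurable_fst
  have hF : Integrable F (μ.prod μ) :=
    (hp.mono_set Ioc_subset_Icc_self).mul_prod (hq.mono_set Ioc_subset_Icc_self)
  have below : ∫ t in a..b, p t * ∫ s in a..t, q s = ∫ z, S.indicator F z ∂μ.prod μ := by
    rw [integral_prod _ (hF.indicator hS), intervalIntegral.integral_of_le hab]
    refine setIntegral_congr_fun measurableSet_Ioc fun t ht => ?_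
    rw [← setIntegral_Ioc_indicator_Iic ht, ← integral_const_mul]
    congr 1 with s
    by_cases hst : s ≤ t <;> simp [S, F, hst]
  have above : ∫ t in a..b, (∫ s in a..t, p s) * q t = ∫ z, Sᶜ.indicator F z ∂μ.prod μ := by
    rw [integral_prod_symm _ (hF.indicator hS.compl), intervalIntegral.integral_of_le hab]
    refine setIntegral_congr_fun measurableSet_Ioc fun t ht => ?_
    rw [← setIntegral_Ioc_indicator_Iio ht, ← integral_mul_const]
    congr 1 with s
    by_cases hst : s < t <;> simp [S, F, hst]
  rw [below, above, ← integral_add (hF.indicator hS) (hF.indicator hS.compl)]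
  simp_rw [indicator_self_add_compl_apply]
  rw [integral_prod_mul, intervalIntegral.integral_of_le hab, intervalIntegral.integral_of_le hab]

namespace IsPrimitiveOn

variable {u v p q : ℝ → 𝕜}

lemma continuousOn_primitive (h : IsPrimitiveOn a b u p) :
    ContinuousOn (fun t => ∫ s in a..t, p s) (Icc a b) :=
  (intervalIntegral.continuousOn_primitive h.1).congr fun _ ht =>
    intervalIntegral.integral_of_le ht.1

lemma continuousOn (h : IsPrimitiveOn a b u p) : ContinuousOn u (Icc a b) :=
  (continuousOn_const.add h.continuousOn_primitive).congr h.2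

lemma integral_eq_sub (h : IsPrimitiveOn a b u p) (hab : a ≤ b) :
    ∫ t in a..b, p t = u b - u a := by
  rw [h.2 b (right_mem_Icc.2 hab), add_sub_cancel_left]

lemma mono_right (h : IsPrimitiveOn a b u p) {t : ℝ} (ht : t ∈ Icc a b) :
    IsPrimitiveOn a t u p :=
  ⟨h.1.mono_set (Icc_subset_Icc_right ht.2),
    fun s hs => h.2 s ⟨hs.1, hs.2.trans ht.2⟩⟩

lemma integral_deriv_mul_eq_sub (hu : IsPrimitiveOn a b u p) (hv : IsPrimitiveOn a b v q)
    (hab : a ≤ b) : ∫ t in a..b, (p t * v t + u t * q t) = u b * v b - u a * v a := by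
  set P : ℝ → 𝕜 := fun t => ∫ s in a..t, p s
  set Q : ℝ → 𝕜 := fun t => ∫ s in a..t, q s
  have hab' : b ∈ Icc a b := right_mem_Icc.2 hab
  have onInterval {f : ℝ → 𝕜} (hf : IntegrableOn f (Icc a b)) :
      IntervalIntegrable f volume a b :=
    hf.intervalIntegrable_of_mem_Icc hab'
  have hP : ContinuousOn P (Icc a b) := hu.continuousOn_primitive
  have hQ : ContinuousOn Q (Icc a b) := hv.continuousOn_primitive
  have split : ∫ t in a..b, (p t * v t + u t * q t) =
      ∫ t in a..b, ((p t * v a + u a * q t) + (p t * Q t + P t * q t)) :=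
    intervalIntegral.integral_congr fun t ht => by
      rw [uIcc_of_le hab] at ht
      rw [hu.2 t ht, hv.2 t ht]
      ring
  rw [split, intervalIntegral.integral_add
      ((onInterval hu.1).mul_const _ |>.add ((onInterval hv.1).const_mul _))
      ((onInterval (hu.1.mul_continuousOn hQ isCompact_Icc)).add
        (onInterval (hv.1.continuousOn_mul hP isCompact_Icc))),
    intervalIntegral.integral_add ((onInterval hu.1).mul_const _)
      ((onInterval hv.1).const_mul _),
    intervalIntegral.integral_add (onInterval (hu.1.mul_continuousOn hQ isCompact_Icc))
      (onInterval (hv.1.continuousOn_mul hP isCompact_Icc)),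
    integral_mul_primitive_add_primitive_mul hab hu.1 hv.1, intervalIntegral.integral_mul_const,
    intervalIntegral.integral_const_mul, hu.2 b hab', hv.2 b hab']
  ring

lemma mul (hu : IsPrimitiveOn a b u p) (hv : IsPrimitiveOn a b v q) :
    IsPrimitiveOn a b (fun t => u t * v t) (fun t => p t * v t + u t * q t) :=
  ⟨(hu.1.mul_continuousOn hv.continuousOn isCompact_Icc).add
      (hv.1.continuousOn_mul hu.continuousOn isCompact_Icc),
    fun t ht => by
      rw [(hu.mono_right ht).integral_deriv_mul_eq_sub (hv.mono_right ht) ht.1,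
        add_sub_cancel]⟩

lemma const_mul (h : IsPrimitiveOn a b u p) (c : 𝕜) :
    IsPrimitiveOn a b (fun t => c * u t) (fun t => c * p t) :=
  ⟨h.1.const_mul c, fun t ht => by
    beta_reduce
    rw [intervalIntegral.integral_const_mul, h.2 t ht, mul_add]⟩

lemma conj (h : IsPrimitiveOn a b u p) :
    IsPrimitiveOn a b (fun t => starRingEnd 𝕜 (u t)) (fun t => starRingEnd 𝕜 (p t)) :=
  ⟨h.1.conj, fun t ht => by
    beta_reduce
    rw [intervalIntegral.intervalIntegral_conj, h.2 t ht, map_add]⟩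

lemma sum {ι : Type*} (s : Finset ι) {u p : ι → ℝ → 𝕜}
    (h : ∀ i ∈ s, IsPrimitiveOn a b (u i) (p i)) :
    IsPrimitiveOn a b (fun t => ∑ i ∈ s, u i t) (fun t => ∑ i ∈ s, p i t) :=
  ⟨integrable_finsetSum s fun i hi => (h i hi).1, fun t ht => by
    beta_reduce
    rw [intervalIntegral.integral_finsetSum fun i hi =>
        (h i hi).1.intervalIntegrable_of_mem_Icc ht, ← Finset.sum_add_distrib]
    exact Finset.sum_congr rfl fun i hi => (h i hi).2 t ht⟩

end IsPrimitiveOn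

end Primitive

open scoped ComplexConjugate

section LagrangeBracket

variable {m : ℕ}

lemma LambdaM_mulVec_apply (v : Fin m → ℂ) (j : Fin m) :
    (LambdaM m *ᵥ v) j = (-1) ^ ((j : ℕ) + 1) * v j.rev := by
  rw [mulVec, dotProduct, Fintype.sum_eq_single j.rev]
  · simp only [LambdaM, of_apply, Fin.val_rev]
    rw [if_pos (by omega)]
  · intro k hk
    have : (j : ℕ) + k ≠ m - 1 := fun h => hk (Fin.ext (by simp only [Fin.val_rev]; omega))
    simp [LambdaM, this]

lemma LambdaM_mul_self :
    LambdaM m * LambdaM m = (-1 : ℂ) ^ (m + 1) • (1 : Matrix (Fin m) (Fin m) ℂ) := by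
  ext j k
  rw [mul_apply, ← dotProduct, ← mulVec, LambdaM_mulVec_apply]
  have hj := j.isLt
  by_cases hjk : j = k
  · subst hjk
    simp only [LambdaM, of_apply, Fin.val_rev, Matrix.smul_apply, one_apply_eq]
    rw [if_pos (by omega), ← pow_add]
    simp only [smul_eq_mul, mul_one]
    exact neg_one_pow_congr (by simp only [Nat.even_iff]; omega)
  · have : m - (j + 1) + k ≠ m - 1 := fun h => hjk (Fin.ext (by omega))
    simp [LambdaM, this, one_apply_ne hjk]

lemma isUnit_det_LambdaM : IsUnit (LambdaM m).det :=
  isUnit_det_of_right_inverse (B := (-1 : ℂ) ^ (m + 1) • LambdaM m) (by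
    rw [mul_smul_comm, LambdaM_mul_self, smul_smul, ← pow_add, ← two_mul, pow_mul, neg_one_sq,
      one_pow, one_smul])

lemma LambdaM_mul_eq_neg_of_formalAdjoint_eq {A : ℝ → Matrix (Fin m) (Fin m) ℂ} {t : ℝ}
    (h : formalAdjoint A t = A t) : LambdaM m * A t = -((A t)ᴴ * LambdaM m) := by
  conv_lhs => rw [← h]
  rw [formalAdjoint, mul_neg, ← Matrix.mul_assoc, ← Matrix.mul_assoc,
    mul_nonsing_inv _ isUnit_det_LambdaM, Matrix.one_mul]

def lagrangeBracket (u v : Fin m → ℂ) : ℂ := star u ⬝ᵥ (LambdaM m *ᵥ v)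

lemma lagrangeBracket_eq_sum (u v : Fin m → ℂ) :
    lagrangeBracket u v = ∑ j : Fin m, (-1) ^ ((j : ℕ) + 1) * (conj (u j) * v j.rev) := by
  simp only [lagrangeBracket, dotProduct, LambdaM_mulVec_apply, Pi.star_apply, RCLike.star_def]
  exact Finset.sum_congr rfl fun j _ => by ring

lemma lagrangeBracket_add_left (u u' v : Fin m → ℂ) :
    lagrangeBracket (u + u') v = lagrangeBracket u v + lagrangeBracket u' v := by
  simp only [lagrangeBracket, star_add, add_dotProduct]

lemma lagrangeBracket_add_right (u v v' : Fin m → ℂ) :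
    lagrangeBracket u (v + v') = lagrangeBracket u v + lagrangeBracket u v' := by
  simp only [lagrangeBracket, mulVec_add, dotProduct_add]

lemma lagrangeBracket_mulVec_add_lagrangeBracket_mulVec {B : Matrix (Fin m) (Fin m) ℂ}
    (hB : LambdaM m * B = -(Bᴴ * LambdaM m)) (u v : Fin m → ℂ) :
    lagrangeBracket (B *ᵥ u) v + lagrangeBracket u (B *ᵥ v) = 0 := by
  simp only [lagrangeBracket, star_mulVec, ← dotProduct_mulVec, mulVec_mulVec, hB, neg_mulVec,
    dotProduct_neg, add_neg_cancel]

def lastCoord (m : ℕ) (c : ℂ) : Fin m → ℂ := fun j => if (j : ℕ) + 1 = m then c else 0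

variable [NeZero m]

lemma lagrangeBracket_lastCoord_left (c : ℂ) (v : Fin m → ℂ) :
    lagrangeBracket (lastCoord m c) v = (-1) ^ m * (conj c * v 0) := by
  have hm := NeZero.pos m
  rw [lagrangeBracket_eq_sum, Fintype.sum_eq_single (Fin.rev 0)]
  · have h : m - (0 + 1) + 1 = m := by omega
    simp [lastCoord, h]
  · intro j hj
    have : (j : ℕ) + 1 ≠ m := fun h =>
      hj (Fin.ext (by simp only [Fin.val_rev, Fin.val_zero]; omega))
    simp [lastCoord, this]

lemma lagrangeBracket_lastCoord_right (u : Fin m → ℂ) (c : ℂ) :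
    lagrangeBracket u (lastCoord m c) = -(conj (u 0) * c) := by
  rw [lagrangeBracket_eq_sum, Fintype.sum_eq_single 0]
  · have h : m - 1 + 1 = m := by have := NeZero.pos m; omega
    simp [lastCoord, h]
  · intro j hj
    have : m - ((j : ℕ) + 1) + 1 ≠ m := by
      have := j.isLt
      have : (j : ℕ) ≠ 0 := fun h => hj (Fin.ext (by rw [h, Fin.val_zero]))
      omega
    simp only [lastCoord, Fin.val_rev]
    rw [if_neg this, mul_zero, mul_zero]

lemma lagrangeBracket_quasiDeriv {B : Matrix (Fin m) (Fin m) ℂ}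
    (hB : LambdaM m * B = -(Bᴴ * LambdaM m)) (u v : Fin m → ℂ) (cu cv : ℂ) :
    lagrangeBracket (B *ᵥ u + lastCoord m cu) v + lagrangeBracket u (B *ᵥ v + lastCoord m cv) =
      (-1) ^ m * (conj cu * v 0) - conj (u 0) * cv := by
  rw [lagrangeBracket_add_left, lagrangeBracket_add_right, lagrangeBracket_lastCoord_left,
    lagrangeBracket_lastCoord_right]
  linear_combination lagrangeBracket_mulVec_add_lagrangeBracket_mulVec hB u v

end LagrangeBracket

section QuasiDerivatives

variable {a b : ℝ} {m : ℕ} {A : ℝ → Matrix (Fin m) (Fin m) ℂ} {y : ℝ → ℂ}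
  {w : Fin m → ℝ → ℂ} {f : ℝ → ℂ}

lemma HasQD.isPrimitiveOn (h : HasQD a b A y w f) (j : Fin m) :
    IsPrimitiveOn a b (w j) (fun s => (A s *ᵥ (fun k => w k s) + lastCoord m (f s)) j) :=
  h.2.2 j

lemma HasQD.continuousOn [NeZero m] (h : HasQD a b A y w f) : ContinuousOn y (Icc a b) :=
  h.1 0 (Fin.val_zero m) ▸ (h.isPrimitiveOn 0).continuousOn

theorem HasQD.isPrimitiveOn_lagrangeBracket [NeZero m]
    (hA : ∀ t, LambdaM m * A t = -((A t)ᴴ * LambdaM m)) {z : ℝ → ℂ} {w' : Fin m → ℝ → ℂ}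
    {f' : ℝ → ℂ} (hy : HasQD a b A y w f) (hz : HasQD a b A z w' f') :
    IsPrimitiveOn a b (fun t => lagrangeBracket (fun k => w k t) (fun k => w' k t))
      (fun t => (-1) ^ m * (conj (f t) * z t) - conj (y t) * f' t) := by
  have hprim := IsPrimitiveOn.sum Finset.univ fun j _ =>
    ((hy.isPrimitiveOn j).conj.mul (hz.isPrimitiveOn j.rev)).const_mul
      ((-1 : ℂ) ^ ((j : ℕ) + 1))
  convert hprim using 1 <;> funext t
  · exact lagrangeBracket_eq_sum _ _
  · rw [← hy.1 0 (Fin.val_zero m), ← hz.1 0 (Fin.val_zero m)]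
    refine (lagrangeBracket_quasiDeriv (hA t) (fun k => w k t) (fun k => w' k t) _ _).symm.trans
      ?_
    rw [lagrangeBracket_eq_sum, lagrangeBracket_eq_sum, ← Finset.sum_add_distrib]
    exact Finset.sum_congr rfl fun j _ => by ring

end QuasiDerivatives

section BoundaryForm

variable {n : ℕ}

lemma Fin.sum_univ_two_mul {M : Type*} [AddCommMonoid M] (f : Fin (2 * n) → M) :
    ∑ j, f j = ∑ i : Fin n, f ⟨i, by omega⟩ + ∑ i : Fin n, f ⟨n + i, by omega⟩ := by
  rw [← (finCongr (two_mul n).symm).sum_comp, Fin.sum_univ_add]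
  rfl

lemma lagrangeBracket_eq_sum_half (u v : Fin (2 * n) → ℂ) :
    lagrangeBracket u v = ∑ i : Fin n, (-1) ^ ((i : ℕ) + 1) *
      (conj (u ⟨i, by omega⟩) * v ⟨2 * n - 1 - i, by omega⟩ -
        conj (u ⟨2 * n - 1 - i, by omega⟩) * v ⟨i, by omega⟩) := by
  rw [lagrangeBracket_eq_sum, Fin.sum_univ_two_mul]
  conv_lhs => enter [2]; rw [← Equiv.sum_comp Fin.revPerm]
  rw [← Finset.sum_add_distrib]
  refine Finset.sum_congr rfl fun i _ => ?_
  have hi := i.isLt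
  have hlow : (Fin.rev ⟨i, by omega⟩ : Fin (2 * n)) = ⟨2 * n - 1 - i, by omega⟩ :=
    Fin.ext (by simp only [Fin.val_rev]; omega)
  have hhigh :
      (⟨n + (Fin.revPerm i : ℕ), by omega⟩ : Fin (2 * n)) = ⟨2 * n - 1 - i, by omega⟩ :=
    Fin.ext (by simp only [Fin.revPerm_apply, Fin.val_rev]; omega)
  have hhigh_rev : (Fin.rev ⟨2 * n - 1 - i, by omega⟩ : Fin (2 * n)) = ⟨i, by omega⟩ :=
    Fin.ext (by simp only [Fin.val_rev]; omega)
  have hsign : (-1 : ℂ) ^ (2 * n - 1 - (i : ℕ) + 1) = -(-1) ^ ((i : ℕ) + 1) := by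
    rw [pow_succ _ (i : ℕ), mul_neg_one, neg_neg]
    exact neg_one_pow_congr (by simp only [Nat.even_iff]; omega)
  rw [hlow, hhigh, hhigh_rev]
  dsimp only
  rw [hsign]
  ring

lemma sum_conj_Gamma1E_mul_Gamma2E_sub (a b : ℝ) (w w' : Fin (2 * n) → ℝ → ℂ) :
    (∑ k, conj (Gamma1E a b w k) * Gamma2E a b w' k) -
        ∑ k, conj (Gamma2E a b w k) * Gamma1E a b w' k =
      (-1) ^ n * (lagrangeBracket (fun k => w k b) (fun k => w' k b) -
        lagrangeBracket (fun k => w k a) (fun k => w' k a)) := by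
  have hI : Complex.I ^ (2 * n) = (-1) ^ n := by rw [pow_mul, Complex.I_sq]
  simp only [Fin.sum_univ_two_mul, lagrangeBracket_eq_sum_half, Gamma1E, Gamma2E, hI, Fin.is_lt,
    if_true, add_lt_iff_neg_left, not_lt_zero, if_false, add_tsub_cancel_left, map_mul, map_pow,
    map_neg, map_one, mul_sub, Finset.mul_sum, ← Finset.sum_add_distrib, ← Finset.sum_sub_distrib]
  exact Finset.sum_congr rfl fun i _ => by ring

end BoundaryForm

theorem green_identity_even_general
    (a b : ℝ) (hab : a < b) (n : ℕ) (hn : 2 ≤ n)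
    (A : ℝ → Matrix (Fin (2 * n)) (Fin (2 * n)) ℂ)
    (hsa : ∀ t : ℝ, formalAdjoint A t = A t)
    (y z : ℝ → ℂ) (wy wz : Fin (2 * n) → ℝ → ℂ) (fy fz : ℝ → ℂ)
    (hy : HasQD a b A y wy fy)
    (hz : HasQD a b A z wz fz) :
    (∫ t in a..b, (starRingEnd ℂ) (Complex.I ^ (2 * n) * fy t) * z t) -
      (∫ t in a..b, (starRingEnd ℂ) (y t) * (Complex.I ^ (2 * n) * fz t)) =
    (∑ k : Fin (2 * n), (starRingEnd ℂ) (Gamma1E a b wy k) * Gamma2E a b wz k) -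
      ∑ k : Fin (2 * n), (starRingEnd ℂ) (Gamma2E a b wy k) * Gamma1E a b wz k := by
  have : NeZero (2 * n) := ⟨by omega⟩
  have hb : b ∈ Icc a b := right_mem_Icc.2 hab.le
  have hlagrange := (hy.isPrimitiveOn_lagrangeBracket
    (fun t => LambdaM_mul_eq_neg_of_formalAdjoint_eq (hsa t)) hz).integral_eq_sub hab.le
  have hfy : IntegrableOn (fun t => conj (Complex.I ^ (2 * n) * fy t) * z t) (Icc a b) :=
    IntegrableOn.mul_continuousOn (hy.2.1.const_mul _).conj hz.continuousOn isCompact_Icc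
  have hfz : IntegrableOn (fun t => conj (y t) * (Complex.I ^ (2 * n) * fz t)) (Icc a b) :=
    IntegrableOn.continuousOn_mul (Complex.continuous_conj.comp_continuousOn hy.continuousOn)
      (hz.2.1.const_mul _) isCompact_Icc
  rw [sum_conj_Gamma1E_mul_Gamma2E_sub, ← hlagrange, ← intervalIntegral.integral_const_mul,
    ← intervalIntegral.integral_sub (hfy.intervalIntegrable_of_mem_Icc hb)
      (hfz.intervalIntegrable_of_mem_Icc hb)]
  refine intervalIntegral.integral_congr fun t _ => ?_
  simp only [pow_mul, Complex.I_sq, neg_one_sq, one_pow, map_mul, map_pow, map_neg, map_one]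
  ring

/-- **The abstract Green identity for even order** `m = 2n`, `n ≥ 2`.  For a formally
self-adjoint Shin–Zettl matrix `A = A⁺` of order `2n` on `[a,b]` and any
`y, z ∈ Dom(L_max)` (with quasi-derivative data `wy, fy` and `wz, fz`):
`⟨L_max y, z⟩_{L²} − ⟨y, L_max z⟩_{L²} = ⟨Γ₁y, Γ₂z⟩_{ℂ^{2n}} − ⟨Γ₂y, Γ₁z⟩_{ℂ^{2n}}`,
all inner products being conjugate-linear in the first argument. -/
theorem green_identity_even
    (a b : ℝ) (hab : a < b) (n : ℕ) (hn : 2 ≤ n)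
    (A : ℝ → Matrix (Fin (2 * n)) (Fin (2 * n)) ℂ) (hA : IsShinZettl a b A)
    (hsa : ∀ t : ℝ, formalAdjoint A t = A t)
    (y z : ℝ → ℂ) (wy wz : Fin (2 * n) → ℝ → ℂ) (fy fz : ℝ → ℂ)
    (hy : HasQD a b A y wy fy) (hy2 : MeasureTheory.MemLp fy 2 (muab a b))
    (hz : HasQD a b A z wz fz) (hz2 : MeasureTheory.MemLp fz 2 (muab a b)) :
    (∫ t in a..b, (starRingEnd ℂ) (Complex.I ^ (2 * n) * fy t) * z t) -
      (∫ t in a..b, (starRingEnd ℂ) (y t) * (Complex.I ^ (2 * n) * fz t)) =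
    (∑ k : Fin (2 * n), (starRingEnd ℂ) (Gamma1E a b wy k) * Gamma2E a b wz k) -
      ∑ k : Fin (2 * n), (starRingEnd ℂ) (Gamma2E a b wy k) * Gamma1E a b wz k :=
  green_identity_even_general a b hab n hn A hsa y z wy wz fy fz hy hz
end
end

section
/- Let m ≥ 3, 1 ≤ k ≤ ⌊m/2⌋, and let Q : [a,b] → ℂ be k-times differentiable and y : [a,b] → ℂ be m-times differentiable. Define functions D⁰y, …, Dᵐy by: Dʳy := y^{(r)} for 0 ≤ r ≤ m−k−1; D^{m−k+s}y := (D^{m−k+s−1}y)' + i^{−m}(−1)^s·binom(k,s)·Q·Dˢy for 0 ≤ s ≤ k−1; and Dᵐy := (D^{m−1}y)' + i^{−m}(−1)^k·Q·Dᵏy if 2k < m, while Dᵐy := (D^{m−1}y)' + Q·D^{m/2}y + (−1)^{m/2+1}·Q²·y if m = 2k. Then i^m Dᵐy(t) = i^m y^{(m)}(t) + Q^{(k)}(t)·y(t) for all t ∈ [a,b]. -/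
open Set

noncomputable section

/-- The quasi-derivatives `D^[j]y` (for `j = 0, …, m`) regularizing the two-term expression
`l(y) = i^m y^{(m)} + q y` with `q = Q^{(k)}`:
* `D^[r]y = y^{(r)}` for `0 ≤ r ≤ m − k − 1`;
* `D^[m−k+s]y = (D^[m−k+s−1]y)′ + i^{−m}(−1)^s C(k,s) Q · D^[s]y` for `0 ≤ s ≤ k − 1`;
* `D^[m]y = (D^[m−1]y)′ + i^{−m}(−1)^k C(k,k) Q · D^[k]y` if `2k < m`, and
  `D^[m]y = (D^[m−1]y)′ + Q · D^[m/2]y + (−1)^{m/2+1} Q² · y` if `m = 2k`. -/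
def quasiDeriv (m k : ℕ) (Q y : ℝ → ℂ) : ℕ → ℝ → ℂ := fun j =>
  if h : m - k ≤ j ∧ 1 ≤ j ∧ 1 ≤ m - k then
    if j < m ∨ 2 * k < m then
      deriv (quasiDeriv m k Q y (j - 1)) + fun t =>
        Complex.I ^ (-(m : ℤ)) * (-1 : ℂ) ^ (j - (m - k)) * (k.choose (j - (m - k))) *
          Q t * quasiDeriv m k Q y (j - (m - k)) t
    else
      deriv (quasiDeriv m k Q y (j - 1)) + (fun t => Q t * quasiDeriv m k Q y k t) + fun t =>
        (-1 : ℂ) ^ (m / 2 + 1) * Q t ^ 2 * y t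
  else iteratedDeriv j y
  termination_by j => j
  decreasing_by all_goals omega

/-!
Encode a bilinear differential expression `∑ cᵢⱼ Q⁽ⁱ⁾ y⁽ʲ⁾` by the polynomial `∑ cᵢⱼ XⁱYʲ`; by the
Leibniz rule, differentiation becomes multiplication by `X + Y`. The polynomials
`pₛ = ∑_{r ≤ s} C(k,r) (-Y)ʳ (X + Y)ˢ⁻ʳ` satisfy `pₛ₊₁ = (X + Y) pₛ + C(k,s+1) (-Y)ˢ⁺¹`, which is
exactly the recursion defining the quasi-derivatives, so `D^[m-k+s]y = y⁽ᵐ⁻ᵏ⁺ˢ⁾ + i⁻ᵐ pₛ(Q, y)` for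
`s < k`. By the binomial theorem `pₖ = ((X + Y) - Y)ᵏ = Xᵏ`, hence
`(D^[m-1]y)′ = y⁽ᵐ⁾ + i⁻ᵐ (Q⁽ᵏ⁾ y - (-1)ᵏ Q y⁽ᵏ⁾)`. The correction term in `D^[m]y` cancels the
last summand: directly if `2k < m`, and if `m = 2k` because then `i⁻ᵐ = (-1)ᵏ`, so that
`Q · D^[k]y + (-1)ᵏ⁺¹ Q² y = Q y⁽ᵏ⁾`.
-/

open MvPolynomial Finset

section BinomialPartialSum

variable {R : Type*} [CommRing R]

def binomialPartialSum (a b : R) (k s : ℕ) : R :=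
  ∑ r ∈ range (s + 1), (-b) ^ r * (a + b) ^ (s - r) * k.choose r

theorem binomialPartialSum_zero (a b : R) (k : ℕ) : binomialPartialSum a b k 0 = 1 := by
  simp [binomialPartialSum]

theorem binomialPartialSum_succ (a b : R) (k s : ℕ) :
    binomialPartialSum a b k (s + 1) =
      (a + b) * binomialPartialSum a b k s + (-b) ^ (s + 1) * k.choose (s + 1) := by
  rw [binomialPartialSum, sum_range_succ, Nat.sub_self, pow_zero, mul_one, binomialPartialSum,
    mul_sum]
  congr 1
  refine sum_congr rfl fun r hr => ?_
  rw [Nat.sub_add_comm (mem_range_succ_iff.mp hr), pow_succ]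
  ring

theorem binomialPartialSum_self (a b : R) (k : ℕ) : binomialPartialSum a b k k = a ^ k := by
  rw [binomialPartialSum, ← add_pow, neg_add_cancel_comm_assoc]

theorem isHomogeneous_binomialPartialSum {σ : Type*} (i j : σ) (k s : ℕ) :
    (binomialPartialSum (X i) (X j) k s : MvPolynomial σ R).IsHomogeneous s := by
  refine IsHomogeneous.sum _ _ _ fun r hr => ?_
  have := (((isHomogeneous_X R j).neg.pow r).mul
    (((isHomogeneous_X R i).add (isHomogeneous_X R j)).pow (s - r))).mul
    (isHomogeneous_C σ (k.choose r : R))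
  rw [map_natCast] at this
  convert this using 1
  have := mem_range_succ_iff.mp hr
  omega

end BinomialPartialSum

theorem MvPolynomial.X_mul_monomial {σ R : Type*} [CommSemiring R] (i : σ) (d : σ →₀ ℕ) (a : R) :
    X i * monomial d a = monomial (d + Finsupp.single i 1) a := by
  rw [monomial_add_single, pow_one, mul_comm]

section MixedDerivEval

variable (Q y : ℝ → ℂ)

/-- `X 0` stands for a derivative falling on `Q` and `X 1` for one falling on `y`: the monomial
`X 0 ^ i * X 1 ^ j` evaluates to `Q⁽ⁱ⁾ y⁽ʲ⁾`. -/
def mixedDerivEval : MvPolynomial (Fin 2) ℂ →ₗ[ℂ] ℝ → ℂ :=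
  (basisMonomials (Fin 2) ℂ).constr ℂ fun d t => iteratedDeriv (d 0) Q t * iteratedDeriv (d 1) y t

theorem mixedDerivEval_monomial (d : Fin 2 →₀ ℕ) (a : ℂ) :
    mixedDerivEval Q y (monomial d a) =
      fun t => a * (iteratedDeriv (d 0) Q t * iteratedDeriv (d 1) y t) := by
  have : monomial d a = a • basisMonomials (Fin 2) ℂ d := by
    rw [coe_basisMonomials, smul_monomial, smul_eq_mul, mul_one]
  rw [this, map_smul, mixedDerivEval, Module.Basis.constr_basis]
  rfl

theorem mixedDerivEval_X_zero_pow (n : ℕ) :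
    mixedDerivEval Q y (X 0 ^ n) = fun t => iteratedDeriv n Q t * y t := by
  simp [X_pow_eq_monomial, mixedDerivEval_monomial]

theorem mixedDerivEval_one : mixedDerivEval Q y 1 = fun t => Q t * y t := by
  simpa using mixedDerivEval_X_zero_pow Q y 0

theorem mixedDerivEval_neg_X_one_pow_mul_natCast (n c : ℕ) :
    mixedDerivEval Q y ((-X 1) ^ n * (c : MvPolynomial (Fin 2) ℂ)) =
      fun t => (-1) ^ n * c * Q t * iteratedDeriv n y t := by
  have : (-X 1) ^ n * (c : MvPolynomial (Fin 2) ℂ) =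
      monomial (Finsupp.single 1 n) ((-1) ^ n * (c : ℂ)) := by
    rw [← C_mul_X_pow_eq_monomial, neg_pow, map_mul, map_pow, map_neg, map_one, map_natCast]
    ring
  rw [this, mixedDerivEval_monomial]
  ext t
  simp only [Finsupp.single_eq_same, Finsupp.single_eq_of_ne zero_ne_one, iteratedDeriv_zero]
  ring

theorem hasDerivAt_mixedDerivEval (p : MvPolynomial (Fin 2) ℂ) (t : ℝ)
    (hQ : ∀ j ≤ p.totalDegree, DifferentiableAt ℝ (iteratedDeriv j Q) t)
    (hy : ∀ j ≤ p.totalDegree, DifferentiableAt ℝ (iteratedDeriv j y) t) :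
    HasDerivAt (mixedDerivEval Q y p) (mixedDerivEval Q y ((X 0 + X 1) * p) t) t := by
  rw [p.as_sum, mul_sum, map_sum, map_sum, Finset.sum_apply]
  refine HasDerivAt.sum fun d hd => ?_
  have hle : ∀ i, d i ≤ p.totalDegree := fun i =>
    (monomial_le_degreeOf i hd).trans (degreeOf_le_totalDegree p i)
  have hQd := (hQ _ (hle 0)).hasDerivAt
  have hyd := (hy _ (hle 1)).hasDerivAt
  rw [← iteratedDeriv_succ] at hQd hyd
  simp only [add_mul, X_mul_monomial, map_add, mixedDerivEval_monomial, Pi.add_apply,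
    Finsupp.coe_add, Finsupp.single_eq_same, Finsupp.single_eq_of_ne one_ne_zero,
    Finsupp.single_eq_of_ne zero_ne_one, add_zero]
  rw [← mul_add]
  exact (hQd.mul hyd).const_mul _

end MixedDerivEval

section QuasiDeriv

variable {m k : ℕ} {Q y : ℝ → ℂ}

theorem quasiDeriv_of_lt_sub {j : ℕ} (hj : j < m - k) :
    quasiDeriv m k Q y j = iteratedDeriv j y := by
  rw [quasiDeriv, dif_neg (by omega)]

theorem quasiDeriv_sub_add {s : ℕ} (hkm : k < m) (hs : s < k ∨ 2 * k < m) :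
    quasiDeriv m k Q y (m - k + s) = deriv (quasiDeriv m k Q y (m - k + s - 1)) + fun t =>
      Complex.I ^ (-(m : ℤ)) * (-1) ^ s * k.choose s * Q t * quasiDeriv m k Q y s t := by
  rw [quasiDeriv, dif_pos (by omega), if_pos (by omega), Nat.add_sub_cancel_left]

theorem quasiDeriv_self_of_two_mul_eq (hk : 1 ≤ k) (hkm : 2 * k = m) :
    quasiDeriv m k Q y m = deriv (quasiDeriv m k Q y (m - 1)) +
      (fun t => Q t * quasiDeriv m k Q y k t) + fun t => (-1) ^ (k + 1) * Q t ^ 2 * y t := by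
  rw [quasiDeriv, dif_pos (by omega), if_neg (by omega), show m / 2 = k by omega]

theorem hasDerivAt_iteratedDeriv_add_smul_mixedDerivEval
    (hQ : ∀ j < k, Differentiable ℝ (iteratedDeriv j Q))
    (hy : ∀ j < m, Differentiable ℝ (iteratedDeriv j y)) (hkm : k ≤ m) {s : ℕ} (hs : s < k)
    (c : ℂ) (t : ℝ) :
    HasDerivAt
      (iteratedDeriv (m - k + s) y + c • mixedDerivEval Q y (binomialPartialSum (X 0) (X 1) k s))
      (iteratedDeriv (m - k + s + 1) y t +
        c * mixedDerivEval Q y ((X 0 + X 1) * binomialPartialSum (X 0) (X 1) k s) t) t := by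
  have hdeg := (isHomogeneous_binomialPartialSum (R := ℂ) (0 : Fin 2) 1 k s).totalDegree_le
  have hP := hasDerivAt_mixedDerivEval Q y (binomialPartialSum (X 0) (X 1) k s) t
    (fun j hj => hQ j (by omega) t) (fun j hj => hy j (by omega) t)
  have hY : HasDerivAt (iteratedDeriv (m - k + s) y) (iteratedDeriv (m - k + s + 1) y t) t := by
    rw [iteratedDeriv_succ]
    exact (hy _ (by omega) t).hasDerivAt
  exact hY.add (hP.const_smul c)

theorem quasiDeriv_sub_add_eq_mixedDerivEval (hQ : ∀ j < k, Differentiable ℝ (iteratedDeriv j Q))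
    (hy : ∀ j < m, Differentiable ℝ (iteratedDeriv j y)) (hkm : 2 * k ≤ m) {s : ℕ} (hs : s < k) :
    quasiDeriv m k Q y (m - k + s) = iteratedDeriv (m - k + s) y +
      Complex.I ^ (-(m : ℤ)) • mixedDerivEval Q y (binomialPartialSum (X 0) (X 1) k s) := by
  induction s with
  | zero =>
    rw [quasiDeriv_sub_add (by omega) (Or.inl hs), quasiDeriv_of_lt_sub (by omega),
      quasiDeriv_of_lt_sub (by omega), binomialPartialSum_zero, mixedDerivEval_one,
      ← iteratedDeriv_succ, Nat.sub_add_cancel (by omega)]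
    ext t
    simp [mul_assoc]
  | succ s ih =>
    rw [quasiDeriv_sub_add (by omega) (Or.inl hs), quasiDeriv_of_lt_sub (j := s + 1) (by omega),
      show m - k + (s + 1) - 1 = m - k + s by omega, ih (by omega), binomialPartialSum_succ,
      map_add, mixedDerivEval_neg_X_one_pow_mul_natCast]
    ext t
    rw [Pi.add_apply, (hasDerivAt_iteratedDeriv_add_smul_mixedDerivEval hQ hy (by omega)
      (by omega : s < k) _ t).deriv]
    simp only [Pi.add_apply, Pi.smul_apply, smul_eq_mul, add_assoc]
    ring

theorem deriv_quasiDeriv_sub_one (hQ : ∀ j < k, Differentiable ℝ (iteratedDeriv j Q))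
    (hy : ∀ j < m, Differentiable ℝ (iteratedDeriv j y)) (hk : 1 ≤ k) (hkm : 2 * k ≤ m) :
    deriv (quasiDeriv m k Q y (m - 1)) = iteratedDeriv m y + fun t => Complex.I ^ (-(m : ℤ)) *
      (iteratedDeriv k Q t * y t - (-1) ^ k * Q t * iteratedDeriv k y t) := by
  have hpoly : (X 0 + X 1) * binomialPartialSum (X 0) (X 1) k (k - 1) =
      X 0 ^ k - (-X 1) ^ k * (k.choose k : MvPolynomial (Fin 2) ℂ) := by
    have h := binomialPartialSum_succ (X 0 : MvPolynomial (Fin 2) ℂ) (X 1) k (k - 1)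
    rw [Nat.sub_add_cancel hk, binomialPartialSum_self] at h
    exact eq_sub_of_add_eq h.symm
  rw [show m - 1 = m - k + (k - 1) by omega,
    quasiDeriv_sub_add_eq_mixedDerivEval hQ hy hkm (by omega)]
  ext t
  rw [(hasDerivAt_iteratedDeriv_add_smul_mixedDerivEval hQ hy (by omega) (by omega) _ t).deriv,
    hpoly, map_sub, mixedDerivEval_X_zero_pow, mixedDerivEval_neg_X_one_pow_mul_natCast,
    show m - k + (k - 1) + 1 = m by omega]
  simp

theorem quasiDeriv_self (hQ : ∀ j < k, Differentiable ℝ (iteratedDeriv j Q))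
    (hy : ∀ j < m, Differentiable ℝ (iteratedDeriv j y)) (hk : 1 ≤ k) (hkm : 2 * k ≤ m) :
    quasiDeriv m k Q y m = iteratedDeriv m y + fun t =>
      Complex.I ^ (-(m : ℤ)) * (iteratedDeriv k Q t * y t) := by
  rcases hkm.lt_or_eq with hlt | heq
  · have h := quasiDeriv_sub_add (Q := Q) (y := y) (s := k) (by omega) (Or.inr hlt)
    rw [Nat.sub_add_cancel (by omega)] at h
    rw [h, deriv_quasiDeriv_sub_one hQ hy hk hkm, quasiDeriv_of_lt_sub (by omega)]
    ext t
    simp only [Pi.add_apply, Nat.choose_self, Nat.cast_one, mul_one]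
    ring
  · have hc : Complex.I ^ (-(m : ℤ)) = (-1) ^ k := by
      rw [← heq, zpow_neg, zpow_natCast, pow_mul, Complex.I_sq, ← inv_pow, inv_neg_one]
    have hk' := quasiDeriv_sub_add_eq_mixedDerivEval hQ hy hkm (s := 0) hk
    rw [show m - k + 0 = k by omega, binomialPartialSum_zero, mixedDerivEval_one] at hk'
    rw [quasiDeriv_self_of_two_mul_eq hk heq, deriv_quasiDeriv_sub_one hQ hy hk hkm, hk', hc]
    have hsq : (-1 : ℂ) ^ k * (-1) ^ k = 1 := by rw [← mul_pow, neg_one_mul, neg_neg, one_pow]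
    ext t
    simp only [Pi.add_apply, Pi.smul_apply, smul_eq_mul]
    linear_combination (-(Q t * iteratedDeriv k y t)) * hsq

end QuasiDeriv

theorem two_term_quasi_derivative_regularization_general
    (a b : ℝ) (m k : ℕ) (hk1 : 1 ≤ k) (hk2 : k ≤ m / 2)
    (Q y : ℝ → ℂ)
    (hQ : ∀ j < k, Differentiable ℝ (iteratedDeriv j Q))
    (hy : ∀ j < m, Differentiable ℝ (iteratedDeriv j y)) :
    ∀ t ∈ Set.Icc a b,
      Complex.I ^ m * quasiDeriv m k Q y m t =
        Complex.I ^ m * iteratedDeriv m y t + iteratedDeriv k Q t * y t := by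
  rintro t -
  rw [quasiDeriv_self hQ hy hk1 (by omega), Pi.add_apply, mul_add, ← mul_assoc, ← zpow_natCast,
    ← zpow_add₀ Complex.I_ne_zero, add_neg_cancel, zpow_zero, one_mul]

/-- **The higher-order quasi-derivative regularization reproduces the classical two-term
expression for smooth data.**  Let `m ≥ 3`, `1 ≤ k ≤ ⌊m/2⌋`, let `Q` be `k`-times
differentiable and `y` be `m`-times differentiable on `ℝ`.  Then for every `t ∈ [a,b]`,
`i^m D^[m]y(t) = i^m y^{(m)}(t) + Q^{(k)}(t) y(t)`. -/
theorem two_term_quasi_derivative_regularization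
    (a b : ℝ) (hab : a < b) (m k : ℕ) (hm : 3 ≤ m) (hk1 : 1 ≤ k) (hk2 : k ≤ m / 2)
    (Q y : ℝ → ℂ)
    (hQ : ∀ j < k, Differentiable ℝ (iteratedDeriv j Q))
    (hy : ∀ j < m, Differentiable ℝ (iteratedDeriv j y)) :
    ∀ t ∈ Set.Icc a b,
      Complex.I ^ m * quasiDeriv m k Q y m t =
        Complex.I ^ m * iteratedDeriv m y t + iteratedDeriv k Q t * y t :=
  two_term_quasi_derivative_regularization_general a b m k hk1 hk2 Q y hQ hy

end
end
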